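/- arXiv:2107.09059 — 2 statements merged into one kernel-verified Lean document; each statement's English description precedes it below -/
import Mathlib

section
/- The digit-interleaving bijection H_k : Z_p^k → Z_p is measure-preserving: it pushes the normalized Haar measure on Z_p^k forward to the normalized Haar measure on Z_p. -/
open MeasureTheory

variable {p : ℕ}

/-- The `i`-th base-`p` digit of a `p`-adic integer. -/
noncomputable def padicDigit [Fact p.Prime] (x : ℤ_[p]) (i : ℕ) : ℕ :=
  (x.appr (i + 1) - x.appr i) / p ^ i

/-- Congruence modulo `p^n` on `ℤ_[p]`. -/
def CongMod [Fact p.Prime] (n : ℕ) (x y : ℤ_[p]) : Prop :=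
  PadicInt.toZModPow n x = PadicInt.toZModPow n y

/-- Coordinatewise congruence modulo `p^n` on `ℤ_[p]^k`. -/
def CongModVec [Fact p.Prime] {k : ℕ} (n : ℕ) (x y : Fin k → ℤ_[p]) : Prop :=
  ∀ i, CongMod n (x i) (y i)

/-- Coordinatewise reduction `ℤ_[p]^k → (ℤ/p^n ℤ)^k`. -/
noncomputable def redVec [Fact p.Prime] {k : ℕ} (n : ℕ) (x : Fin k → ℤ_[p]) : Fin k → ZMod (p ^ n) :=
  fun i => PadicInt.toZModPow n (x i)

/-- The digit-interleaving map `H_k : ℤ_[p]^k → ℤ_[p]`. -/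
noncomputable def Hk [Fact p.Prime] (k : ℕ) (hk : 0 < k) (x : Fin k → ℤ_[p]) : ℤ_[p] :=
  ∑' m : ℕ, (padicDigit (x ⟨m % k, Nat.mod_lt m hk⟩) (m / k) : ℤ_[p]) * (p : ℤ_[p]) ^ m

/-- `F` is transitive modulo `p^n`: the induced map on `(ℤ/p^n ℤ)^k` is a single cycle. -/
def IsTransitiveModVec [Fact p.Prime] {k : ℕ}
    (F : (Fin k → ℤ_[p]) → (Fin k → ℤ_[p])) (n : ℕ) : Prop :=
  ∀ x y : Fin k → ℤ_[p], ∃ j : ℕ, CongModVec n (F^[j] x) y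

/-- `G` is transitive modulo `p^n`: the induced map on `ℤ/p^n ℤ` is a single cycle. -/
def IsTransitiveModZ [Fact p.Prime] (G : ℤ_[p] → ℤ_[p]) (n : ℕ) : Prop :=
  ∀ x y : ℤ_[p], ∃ j : ℕ, CongMod n (G^[j] x) y

noncomputable instance [Fact p.Prime] : MeasurableSpace ℤ_[p] := borel _
instance [Fact p.Prime] : BorelSpace ℤ_[p] := ⟨rfl⟩

/-- The normalized Haar measure on `ℤ_[p]`. -/
noncomputable def haarZ [Fact p.Prime] : Measure ℤ_[p] :=
  Measure.addHaarMeasure (⊤ : TopologicalSpace.PositiveCompacts ℤ_[p])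

/-- The normalized Haar measure on `ℤ_[p]^k`. -/
noncomputable def haarZk [Fact p.Prime] (k : ℕ) : Measure (Fin k → ℤ_[p]) :=
  Measure.addHaarMeasure (⊤ : TopologicalSpace.PositiveCompacts (Fin k → ℤ_[p]))

/-!
Reduction modulo `p ^ (n * k)` of `Hk x` only depends on the reductions modulo `p ^ n` of the
coordinates of `x`, through the digit-interleaving bijection `(ℤ/p^n)^k ≃ ℤ/p^(nk)`. So `Hk` pulls
each residue class modulo `p ^ (n * k)` back to a residue class of `ℤ_[p]^k` modulo `p ^ n`; both
are cosets of subgroups of index `p ^ (n * k)` and have Haar measure `p ^ (-(n * k))`. These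
residue classes form a π-system generating the Borel σ-algebra of `ℤ_[p]`, so `Hk` pushes Haar
measure to Haar measure.
-/

open Finset Function

namespace PadicInt

variable [hp : Fact p.Prime]

theorem toZModPow_preimage_singleton (N : ℕ) (x : ℤ_[p]) :
    toZModPow N ⁻¹' {toZModPow N x} = Metric.closedBall x ((p : ℝ) ^ (-(N : ℤ))) := by
  ext y
  rw [Set.mem_preimage, Set.mem_singleton_iff, Metric.mem_closedBall, dist_eq_norm, ← sub_eq_zero,
    ← map_sub, ← RingHom.mem_ker, ker_toZModPow, norm_le_pow_iff_mem_span_pow]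

theorem toZModPow_preimage_singleton_subset {N M : ℕ} (h : N ≤ M) (x : ℤ_[p]) :
    toZModPow M ⁻¹' {toZModPow M x} ⊆ toZModPow N ⁻¹' {toZModPow N x} := by
  intro y hy
  rw [Set.mem_preimage, Set.mem_singleton_iff] at hy ⊢
  rw [← cast_toZModPow N M h, hy, cast_toZModPow N M h]

theorem continuous_toZModPow (N : ℕ) : Continuous (toZModPow N : ℤ_[p] → ZMod (p ^ N)) := by
  refine continuous_discrete_rng.mpr fun a => ?_
  obtain ⟨x, rfl⟩ := ZMod.ringHom_surjective (toZModPow N) a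
  rw [toZModPow_preimage_singleton]
  exact IsUltrametricDist.isOpen_closedBall x (zpow_ne_zero _ (mod_cast hp.out.ne_zero))

theorem measurable_toZModPow (N : ℕ) : Measurable (toZModPow N : ℤ_[p] → ZMod (p ^ N)) :=
  (continuous_toZModPow N).measurable

def cylinders (k : ℕ) : Set (Set ℤ_[p]) :=
  {s | ∃ (n : ℕ) (a : ZMod (p ^ (n * k))), s = toZModPow (n * k) ⁻¹' {a}}

theorem isPiSystem_cylinders (k : ℕ) : IsPiSystem (cylinders (p := p) k) := by
  rintro _ ⟨n₁, a, rfl⟩ _ ⟨n₂, b, rfl⟩ ⟨z, hza, hzb⟩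
  rw [Set.mem_preimage, Set.mem_singleton_iff] at hza hzb
  subst hza hzb
  rcases le_total n₁ n₂ with h | h
  · rw [Set.inter_eq_right.mpr (toZModPow_preimage_singleton_subset (Nat.mul_le_mul_right k h) z)]
    exact ⟨n₂, _, rfl⟩
  · rw [Set.inter_eq_left.mpr (toZModPow_preimage_singleton_subset (Nat.mul_le_mul_right k h) z)]
    exact ⟨n₁, _, rfl⟩

theorem isTopologicalBasis_cylinders {k : ℕ} (hk : 0 < k) :
    TopologicalSpace.IsTopologicalBasis (cylinders (p := p) k) := by
  refine TopologicalSpace.isTopologicalBasis_of_isOpen_of_nhds ?_ fun x u hxu hu => ?_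
  · rintro _ ⟨n, a, rfl⟩
    exact (isOpen_discrete {a}).preimage (continuous_toZModPow _)
  obtain ⟨ε, hε, hball⟩ := Metric.isOpen_iff.mp hu x hxu
  obtain ⟨n, hn⟩ := exists_pow_neg_lt p hε
  refine ⟨_, ⟨n, toZModPow (n * k) x, rfl⟩, rfl, ?_⟩
  rw [toZModPow_preimage_singleton]
  refine (Metric.closedBall_subset_ball (lt_of_le_of_lt ?_ hn)).trans hball
  exact zpow_le_zpow_right₀ (mod_cast hp.out.one_le)
    (by have := Nat.le_mul_of_pos_right n hk; omega)

theorem borel_eq_generateFrom_cylinders {k : ℕ} (hk : 0 < k) :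
    (inferInstance : MeasurableSpace ℤ_[p]) = MeasurableSpace.generateFrom (cylinders k) := by
  rw [BorelSpace.measurable_eq (α := ℤ_[p]),
    (isTopologicalBasis_cylinders hk).borel_eq_generateFrom]

end PadicInt

open scoped ENNReal in
theorem AddMonoidHomClass.measure_preimage_singleton_of_surjective {G F H : Type*} [AddGroup G]
    [MeasurableSpace G] [MeasurableAdd G] [AddGroup F] [Finite F] [FunLike H G F]
    [AddMonoidHomClass H G F] (μ : Measure G) [IsProbabilityMeasure μ] [μ.IsAddLeftInvariant]
    (f : H) (hf : Surjective f) (hker : MeasurableSet (f ⁻¹' {0})) (a : F) :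
    μ (f ⁻¹' {a}) = (Nat.card F : ℝ≥0∞)⁻¹ := by
  obtain ⟨g, rfl⟩ := hf a
  set K := AddMonoidHom.ker (f : G →+ F)
  have htranslate : (g + ·) ⁻¹' (f ⁻¹' {f g}) = K := by
    ext x
    simp [K, map_add]
  have hindex : K.index = Nat.card F := by
    rw [AddSubgroup.index_ker, AddMonoidHom.range_eq_top.mpr hf, AddSubgroup.card_top]
  have : K.FiniteIndex := ⟨hindex ▸ Nat.card_pos.ne'⟩
  have hmul := AddSubgroup.index_mul_measure K hker μ
  rw [measure_univ, hindex, mul_comm] at hmul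
  rw [← measure_preimage_add μ g, htranslate]
  exact ENNReal.eq_inv_of_mul_eq_one_left hmul

section HaarMeasure

open scoped ENNReal

variable [Fact p.Prime]

instance : IsProbabilityMeasure (haarZ (p := p)) :=
  ⟨by rw [haarZ, ← TopologicalSpace.PositiveCompacts.coe_top]; exact Measure.addHaarMeasure_self⟩

instance (k : ℕ) : IsProbabilityMeasure (haarZk (p := p) k) :=
  ⟨by rw [haarZk, ← TopologicalSpace.PositiveCompacts.coe_top]; exact Measure.addHaarMeasure_self⟩

instance : (haarZ (p := p)).IsAddLeftInvariant := Measure.isAddLeftInvariant_addHaarMeasure _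

instance (k : ℕ) : (haarZk (p := p) k).IsAddLeftInvariant :=
  Measure.isAddLeftInvariant_addHaarMeasure _

theorem measurable_redVec {k : ℕ} (n : ℕ) : Measurable (redVec (p := p) (k := k) n) :=
  measurable_pi_lambda _ fun i => (PadicInt.measurable_toZModPow n).comp (measurable_pi_apply i)

theorem haarZ_preimage_toZModPow (N : ℕ) (a : ZMod (p ^ N)) :
    haarZ (PadicInt.toZModPow N ⁻¹' {a}) = ((p : ℝ≥0∞) ^ N)⁻¹ := by
  rw [AddMonoidHomClass.measure_preimage_singleton_of_surjective haarZ (PadicInt.toZModPow N)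
    (ZMod.ringHom_surjective _) (PadicInt.measurable_toZModPow N (measurableSet_singleton 0)) a,
    Nat.card_zmod, Nat.cast_pow]

theorem haarZk_preimage_redVec {k : ℕ} (n : ℕ) (b : Fin k → ZMod (p ^ n)) :
    haarZk k (redVec n ⁻¹' {b}) = ((p : ℝ≥0∞) ^ (n * k))⁻¹ := by
  change haarZk k ((PadicInt.toZModPow n).compLeft (Fin k) ⁻¹' {b}) = _
  rw [AddMonoidHomClass.measure_preimage_singleton_of_surjective (haarZk k) _ _
    (measurable_redVec n (measurableSet_singleton 0)) b,
    Nat.card_fun, Nat.card_zmod, Nat.card_fin, ← pow_mul, Nat.cast_pow]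
  exact (ZMod.ringHom_surjective (PadicInt.toZModPow n)).comp_left

end HaarMeasure

namespace ZMod

variable (b : ℕ) [NeZero b]

def digitsEquiv (n : ℕ) : ZMod (b ^ n) ≃ (Fin n → Fin b) where
  toFun z := finFunctionFinEquiv.symm ⟨z.val, z.val_lt⟩
  invFun d := (finFunctionFinEquiv d : ℕ)
  left_inv z := by simp
  right_inv d := by
    simp only [ZMod.val_cast_of_lt (finFunctionFinEquiv d).isLt, Fin.eta, Equiv.symm_apply_apply]

theorem digitsEquiv_symm_apply (n : ℕ) (d : Fin n → Fin b) :
    (digitsEquiv b n).symm d = ((∑ i, (d i : ℕ) * b ^ (i : ℕ) : ℕ) : ZMod (b ^ n)) :=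
  rfl

/-- Digit `i` of coordinate `j` becomes digit `i * k + j`: the map `Hk` at level `n`. -/
def interleaveDigits (n k : ℕ) : (Fin k → ZMod (b ^ n)) ≃ ZMod (b ^ (n * k)) :=
  (Equiv.piCongrRight fun _ => digitsEquiv b n).trans <|
    (Equiv.curry _ _ _).symm.trans <|
      (Equiv.arrowCongr ((Equiv.prodComm _ _).trans finProdFinEquiv) (Equiv.refl _)).trans
        (digitsEquiv b (n * k)).symm

theorem interleaveDigits_apply (n k : ℕ) (v : Fin k → ZMod (b ^ n)) :
    interleaveDigits b n k v =
      (digitsEquiv b (n * k)).symm fun m => digitsEquiv b n (v m.modNat) m.divNat :=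
  rfl

end ZMod

section Digits

variable [hp : Fact p.Prime]

theorem padicDigit_lt (x : ℤ_[p]) (i : ℕ) : padicDigit x i < p := by
  rw [padicDigit, Nat.div_lt_iff_lt_mul (Nat.pow_pos hp.out.pos), ← pow_succ']
  exact (Nat.sub_le _ _).trans_lt (x.appr_lt (i + 1))

theorem PadicInt.appr_eq_sum_padicDigit (x : ℤ_[p]) (n : ℕ) :
    x.appr n = ∑ i ∈ range n, padicDigit x i * p ^ i := by
  induction n with
  | zero => rfl
  | succ n ih =>
    rw [Finset.sum_range_succ, ← ih, padicDigit,
      Nat.div_mul_cancel (x.dvd_appr_sub_appr n (n + 1) n.le_succ),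
      Nat.add_sub_cancel' (x.appr_mono n.le_succ)]

theorem PadicInt.toZModPow_eq_digitsEquiv_symm (x : ℤ_[p]) (n : ℕ) :
    toZModPow n x = (ZMod.digitsEquiv p n).symm fun i => ⟨padicDigit x i, padicDigit_lt x i⟩ := by
  rw [ZMod.digitsEquiv_symm_apply, Fin.sum_univ_eq_sum_range (fun i => padicDigit x i * p ^ i),
    ← appr_eq_sum_padicDigit]
  rfl

theorem PadicInt.digitsEquiv_toZModPow (x : ℤ_[p]) {n : ℕ} (i : Fin n) :
    (ZMod.digitsEquiv p n (toZModPow n x) i : ℕ) = padicDigit x i := by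
  rw [toZModPow_eq_digitsEquiv_symm, Equiv.apply_symm_apply]

theorem PadicInt.summable_natCast_mul_pow (D : ℕ → ℕ) :
    Summable fun m => (D m : ℤ_[p]) * (p : ℤ_[p]) ^ m := by
  refine Summable.of_norm_bounded (summable_geometric_of_lt_one (r := (p : ℝ)⁻¹) (by positivity)
    (inv_lt_one_of_one_lt₀ (mod_cast hp.out.one_lt))) fun m => ?_
  rw [norm_mul, norm_pow, norm_p, inv_pow]
  exact mul_le_of_le_one_left (by positivity) (norm_le_one _)

theorem PadicInt.toZModPow_tsum_natCast_mul_pow (D : ℕ → ℕ) (N : ℕ) :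
    toZModPow N (∑' m, (D m : ℤ_[p]) * (p : ℤ_[p]) ^ m) =
      ((∑ m ∈ range N, D m * p ^ m : ℕ) : ZMod (p ^ N)) := by
  have htail : ∑' m, (D (m + N) : ℤ_[p]) * (p : ℤ_[p]) ^ (m + N) =
      (p : ℤ_[p]) ^ N * ∑' m, (D (m + N) : ℤ_[p]) * (p : ℤ_[p]) ^ m := by
    rw [← (summable_natCast_mul_pow fun m => D (m + N)).tsum_mul_left]
    exact tsum_congr fun m => by ring
  rw [← (summable_natCast_mul_pow D).sum_add_tsum_nat_add N, htail, map_add, map_mul, map_pow,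
    map_natCast, ← Nat.cast_pow, ZMod.natCast_self, zero_mul, add_zero]
  push_cast
  simp [map_sum]

end Digits

section Interleaving

variable [Fact p.Prime] {k : ℕ}

theorem toZModPow_Hk (hk : 0 < k) (n : ℕ) (x : Fin k → ℤ_[p]) :
    PadicInt.toZModPow (n * k) (Hk k hk x) = ZMod.interleaveDigits p n k (redVec n x) := by
  rw [Hk, PadicInt.toZModPow_tsum_natCast_mul_pow, ZMod.interleaveDigits_apply,
    ZMod.digitsEquiv_symm_apply, ← Fin.sum_univ_eq_sum_range]
  congr 2 with m
  rw [redVec, PadicInt.digitsEquiv_toZModPow]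
  rfl

theorem Hk_preimage_toZModPow (hk : 0 < k) (n : ℕ) (a : ZMod (p ^ (n * k))) :
    Hk k hk ⁻¹' (PadicInt.toZModPow (n * k) ⁻¹' {a}) =
      redVec n ⁻¹' {(ZMod.interleaveDigits p n k).symm a} := by
  ext x
  simp only [Set.mem_preimage, Set.mem_singleton_iff, toZModPow_Hk, Equiv.eq_symm_apply]

theorem measurable_Hk (hk : 0 < k) : Measurable (Hk (p := p) k hk) := by
  have h : Measurable[_, .generateFrom (PadicInt.cylinders k)] (Hk (p := p) k hk) := by
    refine measurable_generateFrom ?_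
    rintro _ ⟨n, a, rfl⟩
    rw [Hk_preimage_toZModPow]
    exact measurable_redVec n (measurableSet_singleton _)
  rwa [← PadicInt.borel_eq_generateFrom_cylinders hk] at h

end Interleaving

theorem stmt4 [Fact p.Prime] {k : ℕ} (hk : 0 < k) :
    MeasurePreserving (Hk (p := p) k hk) (haarZk k) haarZ := by
  refine ⟨measurable_Hk hk, ext_of_generate_finite _ (PadicInt.borel_eq_generateFrom_cylinders hk)
    (PadicInt.isPiSystem_cylinders k) ?_ ?_⟩
  · rintro _ ⟨n, a, rfl⟩
    rw [Measure.map_apply (measurable_Hk hk)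
      (PadicInt.measurable_toZModPow _ (measurableSet_singleton a)), Hk_preimage_toZModPow,
      haarZk_preimage_redVec, haarZ_preimage_toZModPow]
  · rw [Measure.map_apply (measurable_Hk hk) .univ, Set.preimage_univ, measure_univ, measure_univ]
end

section
/- Let F : Z_p^k → Z_p^k be 1-Lipschitz, measure-preserving, and transitive modulo p. Then the sets F_k(x_0) = {x_0, F(x_0), ..., F^{p^k - 1}(x_0)}, as x_0 ranges over points with x_0 ≡ (0,...,0) mod p, are pairwise disjoint for distinct such x_0 and their union is all of Z_p^k. -/
open MeasureTheory

variable {p : ℕ}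

section Aux
variable [Fact p.Prime] {k : ℕ}

lemma congMod_iff_norm (n : ℕ) (u v : ℤ_[p]) :
    CongMod n u v ↔ ‖u - v‖ ≤ (p : ℝ) ^ (-n : ℤ) := by
  rw [CongMod, PadicInt.norm_le_pow_iff_mem_span_pow, ← PadicInt.ker_toZModPow,
    RingHom.mem_ker, map_sub, sub_eq_zero]

lemma congModVec_iff_red (n : ℕ) (x y : Fin k → ℤ_[p]) :
    CongModVec n x y ↔ redVec n x = redVec n y := by
  simp [CongModVec, CongMod, redVec, funext_iff]

lemma lip_cong {F : (Fin k → ℤ_[p]) → (Fin k → ℤ_[p])} (hF : LipschitzWith 1 F)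
    (n : ℕ) {x y : Fin k → ℤ_[p]} (h : CongModVec n x y) : CongModVec n (F x) (F y) := by
  intro i
  rw [congMod_iff_norm]
  calc ‖F x i - F y i‖ = dist (F x i) (F y i) := (dist_eq_norm _ _).symm
    _ ≤ dist (F x) (F y) := dist_le_pi_dist _ _ i
    _ ≤ dist x y := by simpa using hF.dist_le_mul x y
    _ ≤ (p:ℝ) ^ (-n:ℤ) := by
        rw [dist_pi_le_iff (by positivity)]
        intro i
        rw [dist_eq_norm]
        exact (congMod_iff_norm n _ _).mp (h i)

/-- A lift of a vector of residues. -/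
noncomputable def liftVec (n : ℕ) (a : Fin k → ZMod (p^n)) : Fin k → ℤ_[p] :=
  fun i => ((a i).val : ℤ_[p])

lemma redVec_liftVec (n : ℕ) (a : Fin k → ZMod (p^n)) : redVec n (liftVec n a) = a := by
  funext i
  simp [redVec, liftVec, map_natCast, ZMod.natCast_val, ZMod.cast_id']

/-- The induced map on `(ℤ/p^n)^k`. -/
noncomputable def sigmaF (F : (Fin k → ℤ_[p]) → (Fin k → ℤ_[p])) (n : ℕ) :
    (Fin k → ZMod (p^n)) → (Fin k → ZMod (p^n)) :=
  fun a => redVec n (F (liftVec n a))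

lemma red_F {F : (Fin k → ℤ_[p]) → (Fin k → ℤ_[p])} (hF : LipschitzWith 1 F)
    (n : ℕ) (x : Fin k → ℤ_[p]) : redVec n (F x) = sigmaF F n (redVec n x) := by
  have h : CongModVec n x (liftVec n (redVec n x)) :=
    (congModVec_iff_red n _ _).mpr (redVec_liftVec n (redVec n x)).symm
  exact (congModVec_iff_red n _ _).mp (lip_cong hF n h)

lemma red_iter {F : (Fin k → ℤ_[p]) → (Fin k → ℤ_[p])} (hF : LipschitzWith 1 F)
    (n : ℕ) (j : ℕ) (x : Fin k → ℤ_[p]) :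
    redVec n (F^[j] x) = (sigmaF F n)^[j] (redVec n x) := by
  induction j with
  | zero => rfl
  | succ j ih =>
      rw [Function.iterate_succ_apply', Function.iterate_succ_apply', red_F hF, ih]

/-- The ball of residue `a` mod `p^n`. -/
def Bset (n : ℕ) (a : Fin k → ZMod (p^n)) : Set (Fin k → ℤ_[p]) := {x | redVec n x = a}

lemma mem_Bset {n : ℕ} {a : Fin k → ZMod (p^n)} {x : Fin k → ℤ_[p]} :
    x ∈ Bset n a ↔ redVec n x = a := Iff.rfl

lemma single_ball_eq (n : ℕ) (c : ZMod (p^n)) :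
    {t : ℤ_[p] | PadicInt.toZModPow n t = c}
      = Metric.ball ((c.val : ℤ_[p])) ((p:ℝ) ^ (-(n:ℤ) + 1)) := by
  have h0 : PadicInt.toZModPow n ((c.val : ℕ) : ℤ_[p]) = c := by
    simp [map_natCast, ZMod.natCast_val, ZMod.cast_id']
  ext t
  simp only [Set.mem_setOf_eq, Metric.mem_ball, dist_eq_norm]
  rw [← PadicInt.norm_le_pow_iff_norm_lt_pow_add_one]
  rw [show (PadicInt.toZModPow n t = c) ↔ CongMod n t ((c.val : ℕ) : ℤ_[p]) by
    rw [CongMod, h0]]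
  rw [congMod_iff_norm]

lemma isOpen_Bset (n : ℕ) (a : Fin k → ZMod (p^n)) : IsOpen (Bset n a) := by
  have : Bset n a = ⋂ i, (fun x : Fin k → ℤ_[p] => x i) ⁻¹'
      {t : ℤ_[p] | PadicInt.toZModPow n t = a i} := by
    ext x; simp [Bset, redVec, funext_iff, Set.mem_iInter]
  rw [this]
  exact isOpen_iInter_of_finite fun i =>
    (by rw [single_ball_eq]; exact Metric.isOpen_ball : IsOpen _).preimage (continuous_apply i)

lemma isClosed_Bset (n : ℕ) (a : Fin k → ZMod (p^n)) : IsClosed (Bset n a) := by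
  have : Bset n a = ⋂ i, (fun x : Fin k → ℤ_[p] => x i) ⁻¹'
      {t : ℤ_[p] | PadicInt.toZModPow n t = a i} := by
    ext x; simp [Bset, redVec, funext_iff, Set.mem_iInter]
  rw [this]
  refine isClosed_iInter fun i => IsClosed.preimage (continuous_apply i) ?_
  have : {t : ℤ_[p] | PadicInt.toZModPow n t = a i}
      = Metric.closedBall (((a i).val : ℤ_[p])) ((p:ℝ) ^ (-(n:ℤ))) := by
    have h0 : PadicInt.toZModPow n (((a i).val : ℕ) : ℤ_[p]) = a i := by
      simp [map_natCast, ZMod.natCast_val, ZMod.cast_id']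
    ext t
    simp only [Set.mem_setOf_eq, Metric.mem_closedBall, dist_eq_norm]
    rw [show (PadicInt.toZModPow n t = a i) ↔ CongMod n t (((a i).val : ℕ) : ℤ_[p]) by
      rw [CongMod, h0]]
    rw [congMod_iff_norm]
  rw [this]
  exact Metric.isClosed_closedBall

lemma nonempty_Bset (n : ℕ) (a : Fin k → ZMod (p^n)) : (Bset n a).Nonempty :=
  ⟨liftVec n a, redVec_liftVec n a⟩

instance haarZk_openPos : (haarZk (p := p) k).IsOpenPosMeasure := by
  unfold haarZk; infer_instance

lemma measure_Bset_pos (n : ℕ) (a : Fin k → ZMod (p^n)) : 0 < haarZk k (Bset n a) :=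
  (isOpen_Bset n a).measure_pos _ (nonempty_Bset n a)

end Aux

section Aux2
variable [Fact p.Prime] {k : ℕ} {F : (Fin k → ℤ_[p]) → (Fin k → ℤ_[p])}

lemma preimage_Bset (hF : LipschitzWith 1 F) (n : ℕ) (a : Fin k → ZMod (p^n)) :
    F ⁻¹' (Bset n a) = {x | sigmaF F n (redVec n x) = a} := by
  ext x; simp [Bset, red_F hF]

lemma sigma_bij (hF : LipschitzWith 1 F) (hmp : MeasurePreserving F (haarZk k) (haarZk k))
    (n : ℕ) : Function.Bijective (sigmaF F n) := by
  have hsurj : Function.Surjective (sigmaF F n) := by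
    intro a
    by_contra hc
    push_neg at hc
    have hempty : F ⁻¹' (Bset n a) = ∅ := by
      rw [preimage_Bset hF]
      ext x
      simp only [Set.mem_setOf_eq, Set.mem_empty_iff_false, iff_false]
      exact fun h => hc _ h
    have hmeas : haarZk k (F ⁻¹' (Bset n a)) = haarZk k (Bset n a) :=
      hmp.measure_preimage (isClosed_Bset n a).measurableSet.nullMeasurableSet
    rw [hempty, measure_empty] at hmeas
    exact absurd hmeas.symm (measure_Bset_pos n a).ne'
  exact ⟨Finite.injective_iff_surjective.mpr hsurj, hsurj⟩

lemma F_inj (hF : LipschitzWith 1 F) (hmp : MeasurePreserving F (haarZk k) (haarZk k)) :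
    Function.Injective F := by
  intro x y hxy
  funext i
  apply PadicInt.ext_of_toZModPow.mp
  intro n
  have h1 : sigmaF F n (redVec n x) = sigmaF F n (redVec n y) := by
    rw [← red_F hF, ← red_F hF, hxy]
  have h2 : redVec n x = redVec n y := (sigma_bij hF hmp n).injective h1
  exact congrFun h2 i

lemma image_Bset (hF : LipschitzWith 1 F) (hmp : MeasurePreserving F (haarZk k) (haarZk k))
    (n : ℕ) (b : Fin k → ZMod (p^n)) : F '' (Bset n b) = Bset n (sigmaF F n b) := by
  apply Set.Subset.antisymm
  · rintro _ ⟨x, hx, rfl⟩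
    rw [mem_Bset, red_F hF, hx]
  · intro z hz
    by_contra hc
    set U : Set (Fin k → ℤ_[p]) := Bset n (sigmaF F n b) \ F '' (Bset n b) with hU
    have hUopen : IsOpen U := by
      refine (isOpen_Bset n _).sdiff ?_
      have : IsCompact (Bset n b) := (isClosed_Bset n b).isCompact
      exact (this.image hF.continuous).isClosed
    have hUpre : F ⁻¹' U = ∅ := by
      ext x
      simp only [hU, Set.preimage_diff, Set.mem_diff, Set.mem_empty_iff_false, iff_false,
        not_and, not_not]
      intro hx
      rw [preimage_Bset hF] at hx
      have hxb : redVec n x = b := (sigma_bij hF hmp n).injective hx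
      exact Set.mem_preimage.mpr ⟨x, hxb, rfl⟩
    have hmeas : haarZk k (F ⁻¹' U) = haarZk k U := by
      refine hmp.measure_preimage hUopen.measurableSet.nullMeasurableSet
    rw [hUpre, measure_empty] at hmeas
    have : U.Nonempty := ⟨z, hz, hc⟩
    exact absurd hmeas.symm (hUopen.measure_pos _ this).ne'

lemma iter_image_Bset (hF : LipschitzWith 1 F) (hmp : MeasurePreserving F (haarZk k) (haarZk k))
    (n : ℕ) (j : ℕ) (b : Fin k → ZMod (p^n)) :
    F^[j] '' (Bset n b) = Bset n ((sigmaF F n)^[j] b) := by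
  induction j with
  | zero => simp
  | succ j ih =>
      rw [Function.iterate_succ' F j, Function.iterate_succ' (sigmaF F n) j,
        Set.image_comp, ih, Function.comp_apply, image_Bset hF hmp]

end Aux2

section Aux3

lemma cycle_lemma {S : Type*} [Fintype S] (σ : S → S) (hinj : Function.Injective σ)
    (htr : ∀ a b : S, ∃ j, σ^[j] a = b) (z : S) :
    (∀ b, ∃ j, j < Fintype.card S ∧ σ^[j] z = b) ∧
    (∀ i j, i < Fintype.card S → j < Fintype.card S → σ^[i] z = σ^[j] z → i = j) := by
  classical
  have hex : ∃ m, 0 < m ∧ σ^[m] z = z := by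
    obtain ⟨j, hj⟩ := htr (σ z) z
    exact ⟨j + 1, Nat.succ_pos j, by rwa [Function.iterate_succ_apply]⟩
  set m := Nat.find hex with hm
  obtain ⟨hmpos, hmz⟩ := Nat.find_spec hex
  have hmul : ∀ q, σ^[m * q] z = z := by
    intro q
    induction q with
    | zero => simp
    | succ q ih =>
        rw [Nat.mul_succ, Function.iterate_add_apply, hmz, ih]
  have hmod : ∀ j, σ^[j] z = σ^[j % m] z := by
    intro j
    conv_lhs => rw [← Nat.mod_add_div j m, Function.iterate_add_apply, hmul]
  have hsurj' : ∀ b, ∃ j, j < m ∧ σ^[j] z = b := by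
    intro b
    obtain ⟨j, hj⟩ := htr z b
    exact ⟨j % m, Nat.mod_lt _ hmpos, by rw [← hmod, hj]⟩
  have hinj' : ∀ i j, i < m → j < m → σ^[i] z = σ^[j] z → i = j := by
    have key : ∀ i j, i ≤ j → j < m → σ^[i] z = σ^[j] z → i = j := by
      intro i j hij hjm heq
      by_contra hne
      have hlt : 0 < j - i := Nat.sub_pos_of_lt (lt_of_le_of_ne hij hne)
      have : σ^[i] (σ^[j - i] z) = σ^[i] z := by
        rw [← Function.iterate_add_apply, Nat.add_sub_cancel' hij, ← heq]
      have hz' : σ^[j - i] z = z := (hinj.iterate i) this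
      exact Nat.find_min hex (m := j - i) (lt_of_le_of_lt (Nat.sub_le j i) hjm) ⟨hlt, hz'⟩
    intro i j him hjm heq
    rcases le_total i j with h | h
    · exact key i j h hjm heq
    · exact (key j i h him heq.symm).symm
  have hmcard : m = Fintype.card S := by
    apply le_antisymm
    · have : Function.Injective (fun i : Fin m => σ^[(i : ℕ)] z) := by
        intro i j hij
        exact Fin.ext (hinj' i j i.isLt j.isLt hij)
      simpa using Fintype.card_le_of_injective _ this
    · have : Function.Surjective (fun i : Fin m => σ^[(i : ℕ)] z) := by
        intro b
        obtain ⟨j, hj, hjb⟩ := hsurj' b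
        exact ⟨⟨j, hj⟩, hjb⟩
      simpa using Fintype.card_le_of_surjective _ this
  rw [hmcard] at hsurj' hinj'
  exact ⟨hsurj', hinj'⟩

variable {p : ℕ} [Fact p.Prime] {k : ℕ} {F : (Fin k → ℤ_[p]) → (Fin k → ℤ_[p])}

lemma sigma_trans (hF : LipschitzWith 1 F) (htrans : IsTransitiveModVec F 1) :
    ∀ a b : Fin k → ZMod (p^1), ∃ j, (sigmaF F 1)^[j] a = b := by
  intro a b
  obtain ⟨j, hj⟩ := htrans (liftVec 1 a) (liftVec 1 b)
  refine ⟨j, ?_⟩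
  have h := (congModVec_iff_red 1 _ _).mp hj
  rwa [red_iter hF, redVec_liftVec, redVec_liftVec] at h

lemma card_res : Fintype.card (Fin k → ZMod (p^1)) = p ^ k := by
  simp [Fintype.card_fun, ZMod.card, pow_one]

end Aux3


theorem stmt10 [Fact p.Prime] {k : ℕ}
    (F : (Fin k → ℤ_[p]) → (Fin k → ℤ_[p])) (hF : LipschitzWith 1 F)
    (hmp : MeasurePreserving F (haarZk k) (haarZk k))
    (htrans : IsTransitiveModVec F 1) :
    (∀ x : Fin k → ℤ_[p], ∃ x0 : Fin k → ℤ_[p],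
        CongModVec 1 x0 0 ∧ ∃ j : ℕ, j < p ^ k ∧ F^[j] x0 = x) ∧
    ∀ x0 y0 : Fin k → ℤ_[p], CongModVec 1 x0 0 → CongModVec 1 y0 0 → x0 ≠ y0 →
      Disjoint {x | ∃ j : ℕ, j < p ^ k ∧ F^[j] x0 = x}
        {x | ∃ j : ℕ, j < p ^ k ∧ F^[j] y0 = x} := by
  --body
  have hbij := sigma_bij hF hmp 1
  obtain ⟨hsurj, hinj⟩ := cycle_lemma (sigmaF F 1) hbij.injective (sigma_trans hF htrans)
    (redVec 1 (0 : Fin k → ℤ_[p]))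
  rw [card_res] at hsurj hinj
  constructor
  · intro x
    obtain ⟨j, hj, hjz⟩ := hsurj (redVec 1 x)
    have himg := iter_image_Bset hF hmp 1 j (redVec 1 (0 : Fin k → ℤ_[p]))
    rw [hjz] at himg
    have hx : x ∈ Bset 1 (redVec 1 x) := rfl
    rw [← himg] at hx
    obtain ⟨x0, hx0, hx0x⟩ := hx
    exact ⟨x0, (congModVec_iff_red 1 _ _).mpr hx0, j, hj, hx0x⟩
  · intro x0 y0 hx0 hy0 hne
    rw [Set.disjoint_left]
    rintro z ⟨j, hj, hjz⟩ ⟨l, hl, hlz⟩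
    have hx0' : redVec 1 x0 = redVec 1 (0 : Fin k → ℤ_[p]) := (congModVec_iff_red 1 _ _).mp hx0
    have hy0' : redVec 1 y0 = redVec 1 (0 : Fin k → ℤ_[p]) := (congModVec_iff_red 1 _ _).mp hy0
    have h1 : (sigmaF F 1)^[j] (redVec 1 (0 : Fin k → ℤ_[p])) = redVec 1 z := by
      rw [← hx0', ← red_iter hF, hjz]
    have h2 : (sigmaF F 1)^[l] (redVec 1 (0 : Fin k → ℤ_[p])) = redVec 1 z := by
      rw [← hy0', ← red_iter hF, hlz]
    have hjl : j = l := hinj j l hj hl (h1.trans h2.symm)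
    subst hjl
    exact hne (((F_inj hF hmp).iterate j) (hjz.trans hlz.symm))
end
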